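/- Let l1, l2, l3 > 0 with l1 + l2 + l3 = 1 and 0 < τ < min(l1,l2,l3), and let F = F_τ^{l1,l2,l3}. Then F²(x) = x for every x in K1 = (τ, l1), K2 = (l1+τ, l1+l2) and K3 = (l1+l2+τ, 1); F maps (0, τ) onto (l1, l1+τ), maps (l1, l1+τ) onto (l1+l2, l1+l2+τ), and maps (l1+l2, l1+l2+τ) onto (0, τ) (mod 1); F⁶ restricted to each of these three intervals is the identity, while F³ is not the identity on any nonempty open subinterval of them. Consequently the set of interval periods of F equals {2, 6}. -/

import Mathlib

open Set

noncomputable section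

local instance : Fact ((0:ℝ) < 1) := ⟨one_pos⟩

/-- Representative in `[0,1)` of a point of the circle `ℝ/ℤ`. -/
def rep (x : AddCircle (1:ℝ)) : ℝ := (AddCircle.equivIco 1 0 x : ℝ)

/-- Projection `ℝ → ℝ/ℤ`. -/
def toCirc (t : ℝ) : AddCircle (1:ℝ) := (t : AddCircle (1:ℝ))

/-- The fully flipped 3-interval exchange transformation `F_τ^{l1,l2,l3}`
(it depends only on `l1`, `l2`, `τ`, since `l3 = 1 - l1 - l2`). -/
def FF (l1 l2 τ : ℝ) (x : AddCircle (1:ℝ)) : AddCircle (1:ℝ) :=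
  if rep x < l1 then toCirc (l1 - rep x + τ)
  else if rep x < l1 + l2 then toCirc (2*l1 + l2 - rep x + τ)
  else toCirc (l1 + l2 + 1 - rep x + τ)

/-- A nonempty open arc of the circle `ℝ/ℤ`. -/
def IsOpenArc (I : Set (AddCircle (1:ℝ))) : Prop :=
  ∃ a b : ℝ, a < b ∧ b ≤ a + 1 ∧ I = toCirc '' Ioo a b

/-- `k` is an interval period of `G`. -/
def IsIntervalPeriod (G : AddCircle (1:ℝ) → AddCircle (1:ℝ)) (k : ℕ) : Prop :=
  0 < k ∧ ∃ I : Set (AddCircle (1:ℝ)), IsOpenArc I ∧ (∀ x ∈ I, G^[k] x = x) ∧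
    ∀ j, 0 < j → j < k → ¬ (∀ x ∈ I, G^[j] x = x)

/-! On each of its three pieces `F` is a reflection `t ↦ c - t` of the circle. Following points
through the pieces, `F` reflects each `Kᵢ` onto itself, so `F² = id` there, while it maps
`J₀ = [0, τ] → J₁ = [l1, l1 + τ] → J₂ = [l1 + l2, l1 + l2 + τ] → J₀`, so that `F³`, a product of
three reflections, reflects each `Jᵢ` onto itself. Hence `F⁶ = id` on the whole circle, and every
interval period divides `6` (the periods on an arc are closed under `gcd`). A reflection fixes at
most two points of an arc, and near every point both `F` and `F³` act as reflections, which rules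
out `1` and `3`; the arcs `K₁` and `J₀` realise `2` and `6`. -/

lemma rep_toCirc {t : ℝ} (ht : t ∈ Ico (0:ℝ) 1) : rep (toCirc t) = t := by
  rw [rep, toCirc, AddCircle.equivIco_coe_eq (by simpa using ht)]

lemma toCirc_rep (x : AddCircle (1:ℝ)) : toCirc (rep x) = x :=
  (AddCircle.equivIco 1 0).symm_apply_apply x

lemma rep_mem_Ico (x : AddCircle (1:ℝ)) : rep x ∈ Ico (0:ℝ) 1 := by
  simpa [rep] using (AddCircle.equivIco 1 0 x).2

lemma toCirc_eq_toCirc_iff {s t : ℝ} : toCirc s = toCirc t ↔ ∃ n : ℤ, s = t + n := by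
  rw [toCirc, toCirc, ← sub_eq_zero, ← AddCircle.coe_sub, AddCircle.coe_eq_zero_iff]
  simp only [zsmul_eq_mul, mul_one]
  exact exists_congr fun n => by constructor <;> intro h <;> linarith

lemma toCirc_add_int (t : ℝ) (n : ℤ) : toCirc (t + n) = toCirc t :=
  toCirc_eq_toCirc_iff.2 ⟨n, rfl⟩

lemma toCirc_add_ne {s : ℝ} (t : ℝ) (hs0 : 0 < s) (hs1 : s < 1) :
    toCirc (t + s) ≠ toCirc t := by
  rintro h
  obtain ⟨n, hn⟩ := toCirc_eq_toCirc_iff.1 h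
  have h0 : (0 : ℝ) < n := by linarith
  have h1 : (n : ℝ) < 1 := by linarith
  norm_cast at h0 h1
  omega

def ReflectsOn (G : AddCircle (1:ℝ) → AddCircle (1:ℝ)) (c : ℝ) (s : Set ℝ) : Prop :=
  ∀ t ∈ s, G (toCirc t) = toCirc (c - t)

namespace ReflectsOn

variable {G : AddCircle (1:ℝ) → AddCircle (1:ℝ)} {c : ℝ} {s u : Set ℝ}

lemma mono (hG : ReflectsOn G c s) (hus : u ⊆ s) : ReflectsOn G c u :=
  fun t ht => hG t (hus ht)

lemma add_int (hG : ReflectsOn G c s) (n : ℤ) : ReflectsOn G (c + n) s := fun t ht => by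
  rw [hG t ht, add_sub_right_comm, toCirc_add_int]

lemma apply_apply (hG : ReflectsOn G c s) {t : ℝ} (ht : t ∈ s) (hct : c - t ∈ s) :
    G (G (toCirc t)) = toCirc t := by
  rw [hG t ht, hG _ hct, sub_sub_cancel]

lemma image_Ioo {a b : ℝ} (hG : ReflectsOn G c (Ioo a b)) :
    G '' (toCirc '' Ioo a b) = toCirc '' Ioo (c - b) (c - a) := by
  rw [image_image, ← image_const_sub_Ioo, image_image]
  exact image_congr hG

lemma exists_ne {a b : ℝ} (hab : a < b) (hG : ReflectsOn G c (Ioo a b)) :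
    ∃ t ∈ Ioo a b, G (toCirc t) ≠ toCirc t := by
  by_contra! hfix
  have hint : ∀ t ∈ Ioo a b, ∃ n : ℤ, c - t = t + n := fun t ht =>
    toCirc_eq_toCirc_iff.1 ((hG t ht).symm.trans (hfix t ht))
  -- two fixed points at distance `δ < 1/2` would make `2δ` a positive integer
  set δ := min ((b - a) / 3) (1 / 4)
  have hδ0 : 0 < δ := lt_min (by linarith) (by norm_num)
  have hδ1 : δ ≤ (b - a) / 3 := min_le_left _ _
  have hδ2 : δ ≤ 1 / 4 := min_le_right _ _
  obtain ⟨m, hm⟩ := hint (a + δ) ⟨by linarith, by linarith⟩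
  obtain ⟨n, hn⟩ := hint (a + 2 * δ) ⟨by linarith, by linarith⟩
  have h0 : (n : ℝ) < m := by linarith
  have h1 : (m : ℝ) < n + 1 := by linarith
  norm_cast at h0 h1
  omega

lemma iterate_three (hG : ReflectsOn G c s) (h2 : ∀ t ∈ s, G (G (toCirc t)) = toCirc t) :
    ReflectsOn G^[3] c s := by
  intro t ht
  change G (G (G (toCirc t))) = _
  rw [h2 t ht, hG t ht]

end ReflectsOn

def IsLocallyReflecting (G : AddCircle (1:ℝ) → AddCircle (1:ℝ)) : Prop :=
  ∀ a ∈ Ico (0:ℝ) 1, ∃ b > a, ∃ c, ReflectsOn G c (Ioo a b)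

lemma IsLocallyReflecting.exists_ne {G : AddCircle (1:ℝ) → AddCircle (1:ℝ)}
    (hG : IsLocallyReflecting G) {a b : ℝ} (hab : a < b) :
    ∃ t ∈ Ioo a b, G (toCirc t) ≠ toCirc t := by
  obtain ⟨b₀, hb₀, c, hc⟩ := hG (Int.fract a) ⟨Int.fract_nonneg a, Int.fract_lt_one a⟩
  have hfract : Int.fract a = a - ⌊a⌋ := rfl
  obtain ⟨t, ht, hne⟩ := (hc.mono (Ioo_subset_Ioo_right (min_le_left b₀ (b - ⌊a⌋)))).exists_ne
    (lt_min hb₀ (by linarith))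
  refine ⟨t + ⌊a⌋, ⟨by linarith [ht.1], by linarith [ht.2.trans_le (min_le_right _ _)]⟩, ?_⟩
  rwa [toCirc_add_int]

lemma IsLocallyReflecting.not_forall_mem_arc {G : AddCircle (1:ℝ) → AddCircle (1:ℝ)}
    (hG : IsLocallyReflecting G) {I : Set (AddCircle (1:ℝ))} (hI : IsOpenArc I) :
    ¬ ∀ x ∈ I, G x = x := by
  obtain ⟨a, b, hab, -, rfl⟩ := hI
  obtain ⟨t, ht, hne⟩ := hG.exists_ne hab
  exact fun hfix => hne (hfix _ (mem_image_of_mem _ ht))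

section IntervalPeriod

variable {G : AddCircle (1:ℝ) → AddCircle (1:ℝ)}

lemma iterate_gcd_eq_of_forall_mem {I : Set (AddCircle (1:ℝ))} {m n : ℕ}
    (hm : ∀ x ∈ I, G^[m] x = x) (hn : ∀ x ∈ I, G^[n] x = x) :
    ∀ x ∈ I, G^[m.gcd n] x = x :=
  fun x hx => Function.IsPeriodicPt.gcd (hm x hx) (hn x hx)

lemma IsIntervalPeriod.dvd {k n : ℕ} (hk : IsIntervalPeriod G k) (hn : ∀ x, G^[n] x = x) :
    k ∣ n := by
  obtain ⟨hk0, I, -, hfix, hmin⟩ := hk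
  have hgcd := iterate_gcd_eq_of_forall_mem hfix fun x _ => hn x
  refine Nat.gcd_eq_left_iff_dvd.1 (le_antisymm (Nat.gcd_le_left n hk0) ?_)
  by_contra! hlt
  exact hmin _ (Nat.gcd_pos_of_pos_left n hk0) hlt hgcd

lemma IsLocallyReflecting.not_isIntervalPeriod {k : ℕ} (hG : IsLocallyReflecting G^[k]) :
    ¬ IsIntervalPeriod G k :=
  fun ⟨_, _, hI, hfix, _⟩ => hG.not_forall_mem_arc hI hfix

lemma isIntervalPeriod_of_properDivisors {k : ℕ} (hk : 0 < k) {I : Set (AddCircle (1:ℝ))}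
    (hI : IsOpenArc I) (hfix : ∀ x ∈ I, G^[k] x = x)
    (hdiv : ∀ d ∈ k.properDivisors, ¬ ∀ x ∈ I, G^[d] x = x) :
    IsIntervalPeriod G k := by
  refine ⟨hk, I, hI, hfix, fun j hj0 hjk hj => hdiv (j.gcd k) ?_ ?_⟩
  · exact Nat.mem_properDivisors.2
      ⟨Nat.gcd_dvd_right j k, (Nat.gcd_le_left k hj0).trans_lt hjk⟩
  · exact iterate_gcd_eq_of_forall_mem hj hfix

end IntervalPeriod

section Pieces

variable {l1 l2 τ : ℝ}

lemma FF_reflectsOn_left (hl1 : l1 ≤ 1) : ReflectsOn (FF l1 l2 τ) (l1 + τ) (Ico 0 l1) := by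
  intro t ⟨ht0, ht1⟩
  rw [FF, rep_toCirc ⟨ht0, by linarith⟩, if_pos ht1]
  ring_nf

lemma FF_reflectsOn_middle (hl1 : 0 ≤ l1) (hl12 : l1 + l2 ≤ 1) :
    ReflectsOn (FF l1 l2 τ) (2 * l1 + l2 + τ) (Ico l1 (l1 + l2)) := by
  intro t ⟨ht0, ht1⟩
  rw [FF, rep_toCirc ⟨by linarith, by linarith⟩, if_neg ht0.not_gt, if_pos ht1]
  ring_nf

lemma FF_reflectsOn_right (hl2 : 0 ≤ l2) (hl12 : 0 ≤ l1 + l2) :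
    ReflectsOn (FF l1 l2 τ) (l1 + l2 + τ) (Ico (l1 + l2) 1) := by
  intro t ⟨ht0, ht1⟩
  rw [FF, rep_toCirc ⟨by linarith, ht1⟩, if_neg (by linarith), if_neg ht0.not_gt,
    show l1 + l2 + 1 - t + τ = l1 + l2 + τ - t + (1 : ℤ) by push_cast; ring, toCirc_add_int]

lemma isLocallyReflecting_FF (hl1 : 0 ≤ l1) (hl2 : 0 ≤ l2) (hl12 : l1 + l2 ≤ 1) :
    IsLocallyReflecting (FF l1 l2 τ) := by
  intro a ⟨ha0, ha1⟩
  rcases lt_or_ge a l1 with p1 | p1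
  · exact ⟨l1, p1, _, (FF_reflectsOn_left (by linarith)).mono
      (Ioo_subset_Ico_self.trans (Ico_subset_Ico_left ha0))⟩
  rcases lt_or_ge a (l1 + l2) with p2 | p2
  · exact ⟨l1 + l2, p2, _, (FF_reflectsOn_middle hl1 hl12).mono
      (Ioo_subset_Ico_self.trans (Ico_subset_Ico_left p1))⟩
  · exact ⟨1, ha1, _, (FF_reflectsOn_right hl2 (by linarith)).mono
      (Ioo_subset_Ico_self.trans (Ico_subset_Ico_left p2))⟩

end Pieces

/-- The standing assumption `0 < τ < min l1 l2 l3`, with `l3 = 1 - l1 - l2`. -/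
structure SmallRotation (l1 l2 τ : ℝ) : Prop where
  pos : 0 < τ
  lt_left : τ < l1
  lt_middle : τ < l2
  lt_right : l1 + l2 + τ < 1

namespace SmallRotation

variable {l1 l2 τ : ℝ}

lemma FF_FF_eq (h : SmallRotation l1 l2 τ) {t : ℝ}
    (ht : t ∈ Ioo τ l1 ∪ Ioo (l1 + τ) (l1 + l2) ∪ Ioo (l1 + l2 + τ) 1) :
    FF l1 l2 τ (FF l1 l2 τ (toCirc t)) = toCirc t := by
  obtain ⟨h0, h1, h2, h3⟩ := h
  rcases ht with (⟨ht0, ht1⟩ | ⟨ht0, ht1⟩) | ⟨ht0, ht1⟩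
  · exact (FF_reflectsOn_left (by linarith)).apply_apply
      ⟨by linarith, ht1⟩ ⟨by linarith, by linarith⟩
  · exact (FF_reflectsOn_middle (by linarith) (by linarith)).apply_apply
      ⟨by linarith, ht1⟩ ⟨by linarith, by linarith⟩
  · -- `c - t` falls below `0` on `K3`, so use the centre `c + 1`
    have hG : ReflectsOn (FF l1 l2 τ) (l1 + l2 + τ + (1 : ℤ)) (Ico (l1 + l2) 1) :=
      (FF_reflectsOn_right (by linarith) (by linarith)).add_int 1
    push_cast at hG
    exact hG.apply_apply ⟨by linarith, ht1⟩ ⟨by linarith, by linarith⟩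

lemma reflectsOn_iterate_three_J₀ (h : SmallRotation l1 l2 τ) :
    ReflectsOn (FF l1 l2 τ)^[3] τ (Icc 0 τ) := by
  obtain ⟨h0, h1, h2, h3⟩ := h
  intro t ⟨ht0, ht1⟩
  change FF l1 l2 τ (FF l1 l2 τ (FF l1 l2 τ (toCirc t))) = _
  rw [FF_reflectsOn_left (by linarith) t ⟨ht0, by linarith⟩,
    FF_reflectsOn_middle (by linarith) (by linarith) _ ⟨by linarith, by linarith⟩,
    FF_reflectsOn_right (by linarith) (by linarith) _ ⟨by linarith, by linarith⟩]
  ring_nf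

lemma reflectsOn_iterate_three_J₁ (h : SmallRotation l1 l2 τ) :
    ReflectsOn (FF l1 l2 τ)^[3] (2 * l1 + τ) (Icc l1 (l1 + τ)) := by
  obtain ⟨h0, h1, h2, h3⟩ := h
  intro t ⟨ht0, ht1⟩
  change FF l1 l2 τ (FF l1 l2 τ (FF l1 l2 τ (toCirc t))) = _
  rw [FF_reflectsOn_middle (by linarith) (by linarith) t ⟨ht0, by linarith⟩,
    FF_reflectsOn_right (by linarith) (by linarith) _ ⟨by linarith, by linarith⟩,
    FF_reflectsOn_left (by linarith) _ ⟨by linarith, by linarith⟩]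
  ring_nf

lemma reflectsOn_iterate_three_J₂ (h : SmallRotation l1 l2 τ) :
    ReflectsOn (FF l1 l2 τ)^[3] (2 * l1 + 2 * l2 + τ) (Icc (l1 + l2) (l1 + l2 + τ)) := by
  obtain ⟨h0, h1, h2, h3⟩ := h
  intro t ⟨ht0, ht1⟩
  change FF l1 l2 τ (FF l1 l2 τ (FF l1 l2 τ (toCirc t))) = _
  rw [FF_reflectsOn_right (by linarith) (by linarith) t ⟨ht0, by linarith⟩,
    FF_reflectsOn_left (by linarith) _ ⟨by linarith, by linarith⟩,
    FF_reflectsOn_middle (by linarith) (by linarith) _ ⟨by linarith, by linarith⟩]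
  ring_nf

lemma iterate_six_apply (h : SmallRotation l1 l2 τ) (x : AddCircle (1:ℝ)) :
    (FF l1 l2 τ)^[6] x = x := by
  obtain ⟨ht0, ht1⟩ := rep_mem_Ico x
  rw [← toCirc_rep x]
  set t := rep x
  have of_K (hK : t ∈ Ioo τ l1 ∪ Ioo (l1 + τ) (l1 + l2) ∪ Ioo (l1 + l2 + τ) 1) :
      (FF l1 l2 τ)^[6] (toCirc t) = toCirc t :=
    Function.IsPeriodicPt.mul_const (f := FF l1 l2 τ) (m := 2) (h.FF_FF_eq hK) 3
  have of_J {c : ℝ} {s : Set ℝ} (hJ : ReflectsOn (FF l1 l2 τ)^[3] c s) (hts : t ∈ s)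
      (hcts : c - t ∈ s) : (FF l1 l2 τ)^[6] (toCirc t) = toCirc t :=
    (Function.iterate_add_apply _ 3 3 _).trans (hJ.apply_apply hts hcts)
  have ⟨h0, h1, h2, h3⟩ := h
  rcases le_or_gt t τ with p0 | p0
  · exact of_J h.reflectsOn_iterate_three_J₀ ⟨ht0, p0⟩ ⟨by linarith, by linarith⟩
  rcases lt_or_ge t l1 with p1 | p1
  · exact of_K (Or.inl (Or.inl ⟨p0, p1⟩))
  rcases le_or_gt t (l1 + τ) with p2 | p2
  · exact of_J h.reflectsOn_iterate_three_J₁ ⟨p1, p2⟩ ⟨by linarith, by linarith⟩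
  rcases lt_or_ge t (l1 + l2) with p3 | p3
  · exact of_K (Or.inl (Or.inr ⟨p2, p3⟩))
  rcases le_or_gt t (l1 + l2 + τ) with p4 | p4
  · exact of_J h.reflectsOn_iterate_three_J₂ ⟨p3, p4⟩ ⟨by linarith, by linarith⟩
  · exact of_K (Or.inr ⟨p4, ht1⟩)

lemma isLocallyReflecting_iterate_three (h : SmallRotation l1 l2 τ) :
    IsLocallyReflecting (FF l1 l2 τ)^[3] := by
  have ⟨h0, h1, h2, h3⟩ := h
  intro a ⟨ha0, ha1⟩
  have of_K {b c : ℝ} (hab : a < b) (hG : ReflectsOn (FF l1 l2 τ) c (Ioo a b))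
      (hK : Ioo a b ⊆ Ioo τ l1 ∪ Ioo (l1 + τ) (l1 + l2) ∪ Ioo (l1 + l2 + τ) 1) :
      ∃ b > a, ∃ c, ReflectsOn (FF l1 l2 τ)^[3] c (Ioo a b) :=
    ⟨b, hab, c, hG.iterate_three fun t ht => h.FF_FF_eq (hK ht)⟩
  rcases lt_or_ge a τ with p0 | p0
  · exact ⟨τ, p0, _, h.reflectsOn_iterate_three_J₀.mono
      fun t ht => ⟨by linarith [ht.1], ht.2.le⟩⟩
  rcases lt_or_ge a l1 with p1 | p1
  · exact of_K p1 ((FF_reflectsOn_left (by linarith)).mono fun t ht => ⟨by linarith [ht.1], ht.2⟩)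
      fun t ht => Or.inl (Or.inl ⟨by linarith [ht.1], ht.2⟩)
  rcases lt_or_ge a (l1 + τ) with p2 | p2
  · exact ⟨l1 + τ, p2, _, h.reflectsOn_iterate_three_J₁.mono
      fun t ht => ⟨by linarith [ht.1], ht.2.le⟩⟩
  rcases lt_or_ge a (l1 + l2) with p3 | p3
  · exact of_K p3 ((FF_reflectsOn_middle (by linarith) (by linarith)).mono
      fun t ht => ⟨by linarith [ht.1], ht.2⟩) fun t ht => Or.inl (Or.inr ⟨by linarith [ht.1], ht.2⟩)
  rcases lt_or_ge a (l1 + l2 + τ) with p4 | p4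
  · exact ⟨l1 + l2 + τ, p4, _, h.reflectsOn_iterate_three_J₂.mono
      fun t ht => ⟨by linarith [ht.1], ht.2.le⟩⟩
  · exact of_K ha1 ((FF_reflectsOn_right (by linarith) (by linarith)).mono
      fun t ht => ⟨by linarith [ht.1], ht.2⟩) fun t ht => Or.inr ⟨by linarith [ht.1], ht.2⟩

lemma not_forall_iterate_two_J₀ (h : SmallRotation l1 l2 τ) :
    ¬ ∀ x ∈ toCirc '' Ioo 0 τ, (FF l1 l2 τ)^[2] x = x := by
  have ⟨h0, h1, h2, h3⟩ := h
  intro hfix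
  have hx := hfix _ (mem_image_of_mem toCirc ⟨half_pos h0, half_lt_self h0⟩)
  change FF l1 l2 τ (FF l1 l2 τ (toCirc (τ / 2))) = _ at hx
  rw [FF_reflectsOn_left (by linarith) _ ⟨by linarith, by linarith⟩,
    FF_reflectsOn_middle (by linarith) (by linarith) _ ⟨by linarith, by linarith⟩] at hx
  exact toCirc_add_ne (τ / 2) (by linarith : 0 < l1 + l2) (by linarith)
    (by rw [← hx]; ring_nf)

lemma isLocallyReflecting (h : SmallRotation l1 l2 τ) : IsLocallyReflecting (FF l1 l2 τ) := by
  have ⟨h0, h1, h2, h3⟩ := h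
  exact isLocallyReflecting_FF (by linarith) (by linarith) (by linarith)

lemma image_J₀ (h : SmallRotation l1 l2 τ) :
    FF l1 l2 τ '' (toCirc '' Ioo 0 τ) = toCirc '' Ioo l1 (l1 + τ) := by
  have ⟨h0, h1, h2, h3⟩ := h
  have hJ : ReflectsOn (FF l1 l2 τ) (l1 + τ) (Ioo 0 τ) :=
    (FF_reflectsOn_left (by linarith)).mono fun t ht => ⟨ht.1.le, by linarith [ht.2]⟩
  rw [hJ.image_Ioo]
  congr 2 <;> ring

lemma image_J₁ (h : SmallRotation l1 l2 τ) :
    FF l1 l2 τ '' (toCirc '' Ioo l1 (l1 + τ)) = toCirc '' Ioo (l1 + l2) (l1 + l2 + τ) := by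
  have ⟨h0, h1, h2, h3⟩ := h
  have hJ : ReflectsOn (FF l1 l2 τ) (2 * l1 + l2 + τ) (Ioo l1 (l1 + τ)) :=
    (FF_reflectsOn_middle (by linarith) (by linarith)).mono
      fun t ht => ⟨ht.1.le, by linarith [ht.2]⟩
  rw [hJ.image_Ioo]
  congr 2 <;> ring

lemma image_J₂ (h : SmallRotation l1 l2 τ) :
    FF l1 l2 τ '' (toCirc '' Ioo (l1 + l2) (l1 + l2 + τ)) = toCirc '' Ioo 0 τ := by
  have ⟨h0, h1, h2, h3⟩ := h
  have hJ : ReflectsOn (FF l1 l2 τ) (l1 + l2 + τ) (Ioo (l1 + l2) (l1 + l2 + τ)) :=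
    (FF_reflectsOn_right (by linarith) (by linarith)).mono
      fun t ht => ⟨ht.1.le, by linarith [ht.2]⟩
  rw [hJ.image_Ioo]
  congr 2 <;> ring

lemma isIntervalPeriod_two (h : SmallRotation l1 l2 τ) : IsIntervalPeriod (FF l1 l2 τ) 2 := by
  have ⟨h0, h1, h2, h3⟩ := h
  have hK₀ : IsOpenArc (toCirc '' Ioo τ l1) := ⟨τ, l1, h1, by linarith, rfl⟩
  refine isIntervalPeriod_of_properDivisors two_pos hK₀
    (fun x ⟨t, ht, hx⟩ => hx ▸ h.FF_FF_eq (Or.inl (Or.inl ht))) fun d hd => ?_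
  obtain rfl : d = 1 := by simpa [show Nat.properDivisors 2 = {1} by decide] using hd
  exact h.isLocallyReflecting.not_forall_mem_arc hK₀

lemma isIntervalPeriod_six (h : SmallRotation l1 l2 τ) : IsIntervalPeriod (FF l1 l2 τ) 6 := by
  have ⟨h0, h1, h2, h3⟩ := h
  have hJ₀ : IsOpenArc (toCirc '' Ioo 0 τ) := ⟨0, τ, h0, by linarith, rfl⟩
  refine isIntervalPeriod_of_properDivisors (by norm_num) hJ₀
    (fun x _ => h.iterate_six_apply x) fun d hd => ?_
  rcases (by simpa [show Nat.properDivisors 6 = {1, 2, 3} by decide] using hd :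
    d = 1 ∨ d = 2 ∨ d = 3) with rfl | rfl | rfl
  · exact h.isLocallyReflecting.not_forall_mem_arc hJ₀
  · exact h.not_forall_iterate_two_J₀
  · exact h.isLocallyReflecting_iterate_three.not_forall_mem_arc hJ₀

lemma setOf_isIntervalPeriod (h : SmallRotation l1 l2 τ) :
    {k : ℕ | IsIntervalPeriod (FF l1 l2 τ) k} = {2, 6} := by
  ext k
  refine ⟨fun hk => ?_, by rintro (rfl | rfl); exacts [h.isIntervalPeriod_two,
    h.isIntervalPeriod_six]⟩
  have hk6 := hk.dvd h.iterate_six_apply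
  have hk0 := hk.1
  have hk6' := Nat.le_of_dvd (by norm_num) hk6
  interval_cases k
  · exact absurd hk (h.isLocallyReflecting.not_isIntervalPeriod (k := 1))
  · exact Or.inl rfl
  · exact absurd hk h.isLocallyReflecting_iterate_three.not_isIntervalPeriod
  · exact absurd hk6 (by decide)
  · exact absurd hk6 (by decide)
  · exact Or.inr rfl

end SmallRotation

theorem statement8_general (l1 l2 l3 τ : ℝ)
    (hsum : l1 + l2 + l3 = 1)
    (hτ0 : 0 < τ) (hτ : τ < min l1 (min l2 l3)) :
    -- F² = id on K1 = (τ, l1), K2 = (l1+τ, l1+l2), K3 = (l1+l2+τ, 1)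
    (∀ x ∈ Ioo τ l1 ∪ Ioo (l1 + τ) (l1 + l2) ∪ Ioo (l1 + l2 + τ) 1,
        FF l1 l2 τ (FF l1 l2 τ (toCirc x)) = toCirc x) ∧
    -- the three remaining intervals are cyclically permuted
    FF l1 l2 τ '' (toCirc '' Ioo 0 τ) = toCirc '' Ioo l1 (l1 + τ) ∧
    FF l1 l2 τ '' (toCirc '' Ioo l1 (l1 + τ)) = toCirc '' Ioo (l1 + l2) (l1 + l2 + τ) ∧
    FF l1 l2 τ '' (toCirc '' Ioo (l1 + l2) (l1 + l2 + τ)) = toCirc '' Ioo 0 τ ∧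
    -- F⁶ is the identity on each of these three intervals
    (∀ x ∈ Ioo (0:ℝ) τ ∪ Ioo l1 (l1 + τ) ∪ Ioo (l1 + l2) (l1 + l2 + τ),
        (FF l1 l2 τ)^[6] (toCirc x) = toCirc x) ∧
    -- but F³ is not the identity on any nonempty open subinterval of them
    (∀ a b : ℝ, a < b →
      (Ioo a b ⊆ Ioo (0:ℝ) τ ∨ Ioo a b ⊆ Ioo l1 (l1 + τ) ∨
        Ioo a b ⊆ Ioo (l1 + l2) (l1 + l2 + τ)) →
      ∃ x ∈ Ioo a b, (FF l1 l2 τ)^[3] (toCirc x) ≠ toCirc x) ∧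
    -- consequently the set of interval periods is {2, 6}
    {k : ℕ | IsIntervalPeriod (FF l1 l2 τ) k} = {2, 6} := by
  simp only [lt_min_iff] at hτ
  have h : SmallRotation l1 l2 τ := ⟨hτ0, hτ.1, hτ.2.1, by linarith [hτ.2.2]⟩
  exact ⟨fun x hx => h.FF_FF_eq hx, h.image_J₀, h.image_J₁, h.image_J₂,
    fun x _ => h.iterate_six_apply _,
    fun a b hab _ => h.isLocallyReflecting_iterate_three.exists_ne hab,
    h.setOf_isIntervalPeriod⟩

/-- For `0 < τ < min lj`, `F = F_τ^{l1,l2,l3}` has three `2`-periodic intervals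
`K1, K2, K3`, cyclically permutes the three remaining intervals (giving a `6`-periodic
orbit of intervals on which `F³` is nowhere the identity), and its set of interval
periods is exactly `{2, 6}`. -/
theorem statement8 (l1 l2 l3 τ : ℝ)
    (h1 : 0 < l1) (h2 : 0 < l2) (h3 : 0 < l3) (hsum : l1 + l2 + l3 = 1)
    (hτ0 : 0 < τ) (hτ : τ < min l1 (min l2 l3)) :
    -- F² = id on K1 = (τ, l1), K2 = (l1+τ, l1+l2), K3 = (l1+l2+τ, 1)
    (∀ x ∈ Ioo τ l1 ∪ Ioo (l1 + τ) (l1 + l2) ∪ Ioo (l1 + l2 + τ) 1,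
        FF l1 l2 τ (FF l1 l2 τ (toCirc x)) = toCirc x) ∧
    -- the three remaining intervals are cyclically permuted
    FF l1 l2 τ '' (toCirc '' Ioo 0 τ) = toCirc '' Ioo l1 (l1 + τ) ∧
    FF l1 l2 τ '' (toCirc '' Ioo l1 (l1 + τ)) = toCirc '' Ioo (l1 + l2) (l1 + l2 + τ) ∧
    FF l1 l2 τ '' (toCirc '' Ioo (l1 + l2) (l1 + l2 + τ)) = toCirc '' Ioo 0 τ ∧
    -- F⁶ is the identity on each of these three intervals
    (∀ x ∈ Ioo (0:ℝ) τ ∪ Ioo l1 (l1 + τ) ∪ Ioo (l1 + l2) (l1 + l2 + τ),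
        (FF l1 l2 τ)^[6] (toCirc x) = toCirc x) ∧
    -- but F³ is not the identity on any nonempty open subinterval of them
    (∀ a b : ℝ, a < b →
      (Ioo a b ⊆ Ioo (0:ℝ) τ ∨ Ioo a b ⊆ Ioo l1 (l1 + τ) ∨
        Ioo a b ⊆ Ioo (l1 + l2) (l1 + l2 + τ)) →
      ∃ x ∈ Ioo a b, (FF l1 l2 τ)^[3] (toCirc x) ≠ toCirc x) ∧
    -- consequently the set of interval periods is {2, 6}
    {k : ℕ | IsIntervalPeriod (FF l1 l2 τ) k} = {2, 6} :=
  statement8_general l1 l2 l3 τ hsum hτ0 hτ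

end
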